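/- Let G be an n-vertex graph with maximum spectral radius among all {K_{k+1}, M_{s+1}}-free graphs, and let B ⊆ V(G) be a Tutte–Berge witness set (all components of G − B odd, |B| + ∑(|G_i|−1)/2 = s). Then among all such extremal graphs chosen to maximize the number of singleton components and minimize the number of neighborhood-equivalence classes in B, any two non-adjacent vertices of B have identical neighborhoods; consequently G[B] is a complete multipartite graph with at most k parts. -/

import Mathlib

open Finset

noncomputable def adjMat {V : Type*} [Fintype V] [DecidableEq V] (G : SimpleGraph V) :
    Matrix V V ℝ :=
  letI := Classical.decRel G.Adj
  G.adjMatrix ℝ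

/-- The spectral radius (largest adjacency eigenvalue) of a finite graph. -/
noncomputable def specRad {V : Type*} [Fintype V] [DecidableEq V] (G : SimpleGraph V) : ℝ :=
  sSup (spectrum ℝ (adjMat G))

/-- `G` contains no matching with `m` edges. -/
def MFree {V : Type*} (G : SimpleGraph V) (m : ℕ) : Prop :=
  ¬ ∃ M : SimpleGraph.Subgraph G, M.IsMatching ∧ M.edgeSet.ncard = m

/-- `B` is a Tutte–Berge witness for `G` with value `s`: every component of `G - B` is
odd and `|B| + ∑ (|G_i| - 1)/2 = s`. -/
def TBWitness {V : Type*} [Fintype V] (G : SimpleGraph V) (B : Set V) (s : ℕ) : Prop :=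
  (∀ c : (G.induce Bᶜ).ConnectedComponent, Odd (Nat.card c.supp)) ∧
    B.ncard + ∑ᶠ c : (G.induce Bᶜ).ConnectedComponent, (Nat.card c.supp - 1) / 2 = s

/-- The number of singleton components of `G - B`. -/
noncomputable def singCount {V : Type*} [Fintype V] (G : SimpleGraph V) (B : Set V) : ℕ :=
  Nat.card {c : (G.induce Bᶜ).ConnectedComponent // Nat.card c.supp = 1}

/-- The number of neighborhood-equivalence classes of `B` in `G`
(vertices `u, w` being equivalent iff `N_G(u) = N_G(w)`). -/
noncomputable def classCount {V : Type*} [Fintype V] (G : SimpleGraph V) (B : Set V) : ℕ :=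
  (G.neighborSet '' B).ncard

/-- An extremal configuration: `G` is `{K_{k+1}, M_{s+1}}`-free with maximum spectral
radius among all such graphs on `V`, and `B` is a Tutte–Berge witness for `G`. -/
def ExtremalPair {V : Type*} [Fintype V] [DecidableEq V]
    (G : SimpleGraph V) (B : Set V) (k s : ℕ) : Prop :=
  G.CliqueFree (k + 1) ∧ MFree G (s + 1) ∧
    (∀ G' : SimpleGraph V, G'.CliqueFree (k + 1) → MFree G' (s + 1) →
      specRad G' ≤ specRad G) ∧
    TBWitness G B s

/-!
Suppose two non-adjacent vertices `u, w ∈ B` had different neighbourhoods. Take a nonnegative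
unit vector `y` attaining the spectral radius and, by symmetry, `(A y)_u ≤ (A y)_w`. Let `U` be
the set of vertices of `B` with the same neighbourhood as `u`, and give each of them the
neighbourhood of `w`: this is `G.comap σ` for the map `σ` sending `U` to `w` and fixing the rest.
Nothing changes on `V \ B`, so the Tutte–Berge witness (hence `M_{s+1}`-freeness) and the
singleton count survive; `G.comap σ` maps homomorphically to `G`, so it stays `K_{k+1}`-free; and
its quadratic form at `y` exceeds that of `G` by `2 (∑_{U} y) ((A y)_w - (A y)_u) ≥ 0`, so it is
again extremal. But the class of `u` has disappeared, contradicting the minimality of the number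
of classes. Non-adjacency in `B` is then transitive, since `u ≁ v ≁ w` gives
`N(u) = N(v) = N(w) ∌ w`.
-/
open Matrix SimpleGraph

namespace Matrix.IsHermitian
variable {n : Type*} [Fintype n] [DecidableEq n] {A : Matrix n n ℝ}

open scoped MatrixOrder in
theorem dotProduct_mulVec_le_sSup_spectrum_mul (hA : A.IsHermitian) (x : n → ℝ) :
    x ⬝ᵥ A *ᵥ x ≤ sSup (spectrum ℝ A) * (x ⬝ᵥ x) := by
  have h : A ≤ sSup (spectrum ℝ A) • 1 := by
    rw [← Algebra.algebraMap_eq_smul_one]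
    exact le_algebraMap_of_spectrum_le fun r hr => le_csSup finite_real_spectrum.bddAbove hr
  simpa [sub_mulVec, dotProduct_sub, smul_mulVec] using
    (Matrix.le_iff.mp h).dotProduct_mulVec_nonneg x

theorem exists_nonneg_sSup_spectrum_le [Nonempty n] (hA : A.IsHermitian)
    (hA₀ : ∀ i j, 0 ≤ A i j) :
    ∃ y : n → ℝ, 0 ≤ y ∧ y ⬝ᵥ y = 1 ∧ sSup (spectrum ℝ A) ≤ y ⬝ᵥ A *ᵥ y := by
  obtain ⟨i, hi⟩ : sSup (spectrum ℝ A) ∈ Set.range hA.eigenvalues := by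
    rw [← hA.spectrum_real_eq_range_eigenvalues]
    refine Set.Nonempty.csSup_mem ?_ finite_real_spectrum
    rw [hA.spectrum_real_eq_range_eigenvalues]
    exact Set.range_nonempty _
  set x : n → ℝ := ⇑(hA.eigenvectorBasis i)
  refine ⟨|x|, fun j => abs_nonneg _, ?_, ?_⟩
  · have h := real_inner_self_eq_norm_sq (hA.eigenvectorBasis i)
    rw [hA.eigenvectorBasis.orthonormal.1 i, EuclideanSpace.inner_eq_star_dotProduct] at h
    simpa [dotProduct, abs_mul_abs_self] using h
  · calc sSup (spectrum ℝ A) = x ⬝ᵥ A *ᵥ x := by simpa [← hi] using hA.eigenvalues_eq i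
      _ ≤ |x| ⬝ᵥ A *ᵥ |x| := by
        simp only [dotProduct, mulVec, Finset.mul_sum]
        refine Finset.sum_le_sum fun j _ => Finset.sum_le_sum fun l _ => ?_
        refine (le_abs_self _).trans_eq ?_
        simp [abs_mul, abs_of_nonneg (hA₀ j l)]

end Matrix.IsHermitian

section Spectral
variable {V : Type*} [Fintype V] [DecidableEq V] (G : SimpleGraph V)

theorem adjMat_apply (i j : V) [Decidable (G.Adj i j)] :
    adjMat G i j = if G.Adj i j then 1 else 0 := by
  simp only [adjMat, adjMatrix_apply]
  congr

theorem isHermitian_adjMat : (adjMat G).IsHermitian := by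
  classical
  exact G.isHermitian_adjMatrix ℝ

theorem adjMat_nonneg (i j : V) : 0 ≤ adjMat G i j := by
  classical
  rw [adjMat_apply]
  split_ifs <;> norm_num

theorem dotProduct_adjMat_mulVec_le (x : V → ℝ) :
    x ⬝ᵥ adjMat G *ᵥ x ≤ specRad G * (x ⬝ᵥ x) :=
  (isHermitian_adjMat G).dotProduct_mulVec_le_sSup_spectrum_mul x

theorem exists_nonneg_specRad_le [Nonempty V] :
    ∃ y : V → ℝ, 0 ≤ y ∧ y ⬝ᵥ y = 1 ∧ specRad G ≤ y ⬝ᵥ adjMat G *ᵥ y :=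
  (isHermitian_adjMat G).exists_nonneg_sSup_spectrum_le (adjMat_nonneg G)

variable {G} {U : Set V} {u w : V}

theorem adjMat_comap_piecewise [DecidablePred (· ∈ U)]
    (hU : ∀ v ∈ U, G.neighborSet v = G.neighborSet u) (huw : ¬ G.Adj u w) :
    adjMat (G.comap (U.piecewise (fun _ => w) id)) =
      adjMat G + vecMulVec (U.indicator 1) (adjMat G w - adjMat G u) +
        vecMulVec (adjMat G w - adjMat G u) (U.indicator 1) := by
  classical
  have hadj : ∀ v ∈ U, ∀ z, G.Adj v z ↔ G.Adj u z := fun v hv z => by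
    rw [← mem_neighborSet, hU v hv, mem_neighborSet]
  have hadj_comm : ∀ v ∈ U, ∀ z, G.Adj z v ↔ G.Adj u z := fun v hv z =>
    (G.adj_comm z v).trans (hadj v hv z)
  ext i j
  by_cases hi : i ∈ U <;> by_cases hj : j ∈ U <;>
    simp [adjMat_apply, vecMulVec_apply, hi, hj, hadj, hadj_comm, huw, G.adj_comm i w]

theorem dotProduct_adjMat_comap_piecewise_mulVec [DecidablePred (· ∈ U)]
    (hU : ∀ v ∈ U, G.neighborSet v = G.neighborSet u) (huw : ¬ G.Adj u w) (y : V → ℝ) :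
    y ⬝ᵥ adjMat (G.comap (U.piecewise (fun _ => w) id)) *ᵥ y =
      y ⬝ᵥ adjMat G *ᵥ y +
        2 * (U.indicator 1 ⬝ᵥ y) * ((adjMat G *ᵥ y) w - (adjMat G *ᵥ y) u) := by
  have hrow : (adjMat G w - adjMat G u) ⬝ᵥ y = (adjMat G *ᵥ y) w - (adjMat G *ᵥ y) u := by
    simp only [sub_dotProduct, mulVec]
  rw [adjMat_comap_piecewise hU huw, add_mulVec, add_mulVec, dotProduct_add, dotProduct_add,
    vecMulVec_mulVec, vecMulVec_mulVec, dotProduct_smul, dotProduct_smul, op_smul_eq_mul,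
    op_smul_eq_mul, dotProduct_comm y (U.indicator 1), dotProduct_comm y (_ - _), hrow]
  ring

end Spectral

namespace SimpleGraph.Subgraph
variable {V : Type*} {G : SimpleGraph V} {M : G.Subgraph}

theorem IsMatching.eq_of_mem_edgeSet (hM : M.IsMatching) {e f : Sym2 V} {v : V}
    (he : e ∈ M.edgeSet) (hf : f ∈ M.edgeSet) (hve : v ∈ e) (hvf : v ∈ f) : e = f := by
  obtain ⟨x, rfl⟩ := Sym2.mem_iff_exists.mp hve
  obtain ⟨y, rfl⟩ := Sym2.mem_iff_exists.mp hvf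
  rw [hM.eq_of_adj_left (M.mem_edgeSet.1 he) (M.mem_edgeSet.1 hf)]

variable {E : Finset (Sym2 V)}

theorem IsMatching.sum_card_inter_le [DecidableEq V] (hM : M.IsMatching)
    (hE : ∀ e ∈ E, e ∈ M.edgeSet) (S : Finset V) : ∑ e ∈ E, #(e.toFinset ∩ S) ≤ #S := by
  rw [← card_biUnion]
  · exact card_le_card (biUnion_subset.2 fun _ _ => inter_subset_right)
  · intro e he f hf hef
    refine Finset.disjoint_left.2 fun v hv hv' => hef ?_
    exact hM.eq_of_mem_edgeSet (hE e he) (hE f hf) (Sym2.mem_toFinset.1 (mem_inter.1 hv).1)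
      (Sym2.mem_toFinset.1 (mem_inter.1 hv').1)

theorem IsMatching.card_le_of_forall_exists_mem [DecidableEq V] (hM : M.IsMatching)
    (hE : ∀ e ∈ E, e ∈ M.edgeSet) (S : Finset V) (hS : ∀ e ∈ E, ∃ v ∈ e, v ∈ S) : #E ≤ #S :=
  calc #E = ∑ e ∈ E, 1 := card_eq_sum_ones E
    _ ≤ ∑ e ∈ E, #(e.toFinset ∩ S) := sum_le_sum fun e he => by
      obtain ⟨v, hve, hvS⟩ := hS e he
      exact card_pos.2 ⟨v, mem_inter.2 ⟨Sym2.mem_toFinset.2 hve, hvS⟩⟩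
    _ ≤ #S := hM.sum_card_inter_le hE S

theorem IsMatching.two_mul_card_le_of_forall_mem [DecidableEq V] (hM : M.IsMatching)
    (hE : ∀ e ∈ E, e ∈ M.edgeSet) (S : Finset V) (hS : ∀ e ∈ E, ∀ v ∈ e, v ∈ S) :
    2 * #E ≤ #S :=
  calc 2 * #E = ∑ e ∈ E, #(e.toFinset ∩ S) := by
        rw [mul_comm, ← smul_eq_mul, ← sum_const]
        refine sum_congr rfl fun e he => ?_
        rw [inter_eq_left.2 fun v hv => hS e he v (Sym2.mem_toFinset.1 hv),
          Sym2.card_toFinset_of_not_isDiag]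
        exact G.not_isDiag_of_mem_edgeSet (M.edgeSet_subset (hE e he))
    _ ≤ #S := hM.sum_card_inter_le hE S

theorem IsMatching.ncard_edgeSet_le [Fintype V] (hM : M.IsMatching) (B : Set V) :
    M.edgeSet.ncard ≤ B.ncard + ∑ᶠ c : (G.induce Bᶜ).ConnectedComponent, Nat.card c.supp / 2 := by
  classical
  set E := M.edgeSet.toFinset
  have hE : ∀ e ∈ E, e ∈ M.edgeSet := fun e he => Set.mem_toFinset.1 he
  let supp (c : (G.induce Bᶜ).ConnectedComponent) : Finset V :=
    c.supp.toFinset.map (Function.Embedding.subtype _)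
  have hB : #(E.filter fun e => ∃ v ∈ e, v ∈ B) ≤ B.ncard := by
    rw [Set.ncard_eq_toFinset_card']
    exact hM.card_le_of_forall_exists_mem (fun e he => hE e (mem_filter.1 he).1) _
      fun e he => by simpa using (mem_filter.1 he).2
  have hcover : E.filter (fun e => ¬ ∃ v ∈ e, v ∈ B) ⊆
      univ.biUnion fun c => E.filter fun e => ∀ v ∈ e, v ∈ supp c := by
    intro e he
    obtain ⟨heE, heB⟩ := mem_filter.1 he
    induction e using Sym2.ind with | _ a b => ?_
    simp only [Sym2.mem_iff, exists_eq_or_imp, exists_eq_left, not_or] at heB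
    have hab : (G.induce Bᶜ).Adj ⟨a, heB.1⟩ ⟨b, heB.2⟩ := M.adj_sub (hE _ heE)
    refine mem_biUnion.2 ⟨(G.induce Bᶜ).connectedComponentMk ⟨a, heB.1⟩, mem_univ _,
      mem_filter.2 ⟨heE, ?_⟩⟩
    intro v hv
    rcases Sym2.mem_iff.1 hv with rfl | rfl
    · simpa [supp] using heB.1
    · simpa [supp] using ⟨heB.2, hab.symm.reachable⟩
  have hC : ∀ c, #(E.filter fun e => ∀ v ∈ e, v ∈ supp c) ≤ Nat.card c.supp / 2 := by
    intro c
    have := hM.two_mul_card_le_of_forall_mem (fun e he => hE e (mem_filter.1 he).1) (supp c)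
      fun e he => (mem_filter.1 he).2
    simp only [supp, card_map, Set.toFinset_card, Nat.card_eq_fintype_card] at this ⊢
    omega
  calc M.edgeSet.ncard = #(E.filter fun e => ∃ v ∈ e, v ∈ B) +
        #(E.filter fun e => ¬ ∃ v ∈ e, v ∈ B) := by
        rw [Set.ncard_eq_toFinset_card', card_filter_add_card_filter_not]
    _ ≤ B.ncard + ∑ c : (G.induce Bᶜ).ConnectedComponent, Nat.card c.supp / 2 := by
        gcongr
        exact (card_le_card hcover).trans (card_biUnion_le.trans (sum_le_sum fun c _ => hC c))
    _ = _ := by rw [finsum_eq_sum_of_fintype]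

end SimpleGraph.Subgraph

namespace SimpleGraph
variable {V W : Type*}

theorem CliqueFree.of_hom {G : SimpleGraph W} {H : SimpleGraph V} {n : ℕ} (f : H →g G)
    (h : G.CliqueFree n) : H.CliqueFree n := by
  rw [cliqueFree_iff] at *
  exact ⟨fun c => h.elim ⟨f.comp c.toHom, Hom.injective_of_top_hom _⟩⟩

theorem induce_comap_of_eqOn_id {G : SimpleGraph V} {f : V → V} {s : Set V}
    (hf : Set.EqOn f id s) : (G.comap f).induce s = G.induce s := by
  ext ⟨a, ha⟩ ⟨b, hb⟩
  simp [hf ha, hf hb]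

end SimpleGraph

section
variable {V : Type*} [Fintype V] {G : SimpleGraph V} {B : Set V} {s : ℕ}

theorem TBWitness.mFree (h : TBWitness G B s) : MFree G (s + 1) := by
  rintro ⟨M, hM, hcard⟩
  have hodd : ∑ᶠ c : (G.induce Bᶜ).ConnectedComponent, Nat.card c.supp / 2 =
      ∑ᶠ c : (G.induce Bᶜ).ConnectedComponent, (Nat.card c.supp - 1) / 2 :=
    finsum_congr fun c => by obtain ⟨m, hm⟩ := h.1 c; omega
  have := hM.ncard_edgeSet_le B
  have := h.2
  omega

theorem classCount_mono {B' : Set V} (h : B ⊆ B') : classCount G B ≤ classCount G B' :=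
  Set.ncard_le_ncard (Set.image_mono h)

theorem classCount_comap_le (f : V → V) (B : Set V) :
    classCount (G.comap f) B ≤ classCount G (f '' B) := by
  have : (G.comap f).neighborSet '' B = (f ⁻¹' ·) '' (G.neighborSet '' (f '' B)) := by
    rw [Set.image_image, Set.image_image]
    rfl
  rw [classCount, this]
  exact Set.ncard_image_le (Set.toFinite _)

theorem classCount_diff_add_one {u : V} (hu : u ∈ B) :
    classCount G (B \ G.neighborSet ⁻¹' {G.neighborSet u}) + 1 = classCount G B := by
  rw [classCount, Set.image_sdiff_preimage]
  exact Set.ncard_sdiff_singleton_add_one (Set.mem_image_of_mem _ hu)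

end

section
variable {V : Type*} [Fintype V] [DecidableEq V] {G : SimpleGraph V} {B : Set V} {k s : ℕ}

theorem ExtremalPair.exists_classCount_lt (hext : ExtremalPair G B k s) {u w : V}
    (hu : u ∈ B) (hw : w ∈ B) (huw : ¬ G.Adj u w) (hN : G.neighborSet w ≠ G.neighborSet u)
    {y : V → ℝ} (hy₀ : 0 ≤ y) (hy₁ : y ⬝ᵥ y = 1) (hy : specRad G ≤ y ⬝ᵥ adjMat G *ᵥ y)
    (hle : (adjMat G *ᵥ y) u ≤ (adjMat G *ᵥ y) w) :
    ∃ G' : SimpleGraph V, ExtremalPair G' B k s ∧ singCount G' B = singCount G B ∧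
      classCount G' B < classCount G B := by
  classical
  obtain ⟨hK, -, hmax, hTB⟩ := hext
  set U := B ∩ G.neighborSet ⁻¹' {G.neighborSet u}
  set σ : V → V := U.piecewise (fun _ => w) id
  have hind : (G.comap σ).induce Bᶜ = G.induce Bᶜ :=
    induce_comap_of_eqOn_id fun v hv => U.piecewise_eq_of_notMem _ _ fun h => hv h.1
  have hTB' : TBWitness (G.comap σ) B s := by
    unfold TBWitness
    rwa [hind]
  have hρ : specRad G ≤ specRad (G.comap σ) :=
    calc specRad G ≤ y ⬝ᵥ adjMat G *ᵥ y := hy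
      _ ≤ y ⬝ᵥ adjMat (G.comap σ) *ᵥ y := by
        rw [dotProduct_adjMat_comap_piecewise_mulVec (fun v hv => hv.2) huw]
        have : 0 ≤ U.indicator 1 ⬝ᵥ y :=
          dotProduct_nonneg_of_nonneg (Set.indicator_nonneg fun _ _ => zero_le_one) hy₀
        nlinarith
      _ ≤ specRad (G.comap σ) * (y ⬝ᵥ y) := dotProduct_adjMat_mulVec_le _ y
      _ = specRad (G.comap σ) := by rw [hy₁, mul_one]
  have hσB : σ '' B ⊆ B \ G.neighborSet ⁻¹' {G.neighborSet u} := by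
    rintro _ ⟨v, hv, rfl⟩
    by_cases hvU : v ∈ U
    · simpa [σ, hvU] using ⟨hw, hN⟩
    · have : G.neighborSet v ≠ G.neighborSet u := fun h => hvU ⟨hv, h⟩
      simpa [σ, hvU, hv] using this
  refine ⟨G.comap σ, ⟨hK.of_hom (Hom.comap σ G), hTB'.mFree,
    fun G' hK' hM' => (hmax G' hK' hM').trans hρ, hTB'⟩, by unfold singCount; rw [hind], ?_⟩
  calc classCount (G.comap σ) B ≤ classCount G (σ '' B) := classCount_comap_le σ B
    _ ≤ classCount G (B \ G.neighborSet ⁻¹' {G.neighborSet u}) := classCount_mono hσB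
    _ < classCount G B := Nat.lt_iff_add_one_le.2 (classCount_diff_add_one hu).le

theorem ExtremalPair.neighborSet_eq_of_not_adj (hext : ExtremalPair G B k s)
    (hmin : ∀ G' : SimpleGraph V, ExtremalPair G' B k s → singCount G' B = singCount G B →
      classCount G B ≤ classCount G' B)
    {u w : V} (hu : u ∈ B) (hw : w ∈ B) (huw : ¬ G.Adj u w) :
    G.neighborSet u = G.neighborSet w := by
  by_contra hN
  have : Nonempty V := ⟨u⟩
  obtain ⟨y, hy₀, hy₁, hy⟩ := exists_nonneg_specRad_le G
  obtain ⟨G', hG', hsing, hlt⟩ :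
      ∃ G' : SimpleGraph V, ExtremalPair G' B k s ∧ singCount G' B = singCount G B ∧
        classCount G' B < classCount G B := by
    rcases le_total ((adjMat G *ᵥ y) u) ((adjMat G *ᵥ y) w) with hle | hle
    · exact hext.exists_classCount_lt hu hw huw (Ne.symm hN) hy₀ hy₁ hy hle
    · exact hext.exists_classCount_lt hw hu (fun h => huw h.symm) hN hy₀ hy₁ hy hle
  exact (hmin G' hG' hsing).not_gt hlt

end

theorem extremal_nonadj_same_neighborhood_general {V : Type*} [Fintype V] [DecidableEq V]
    (k s : ℕ) (G : SimpleGraph V) (B : Set V)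
    (hext : ExtremalPair G B k s)
    (hminClass : ∀ (G' : SimpleGraph V) (B' : Set V), ExtremalPair G' B' k s →
      singCount G' B' = singCount G B → classCount G B ≤ classCount G' B') :
    (∀ u ∈ B, ∀ w ∈ B, ¬ G.Adj u w → G.neighborSet u = G.neighborSet w) ∧
    (∀ u ∈ B, ∀ v ∈ B, ∀ w ∈ B, ¬ G.Adj u v → ¬ G.Adj v w → ¬ G.Adj u w) ∧
    (∀ t : Finset V, ↑t ⊆ B → G.IsClique ↑t → t.card ≤ k) := by
  have hnbr : ∀ u ∈ B, ∀ w ∈ B, ¬ G.Adj u w → G.neighborSet u = G.neighborSet w :=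
    fun u hu w hw huw => hext.neighborSet_eq_of_not_adj (fun G' => hminClass G' B) hu hw huw
  refine ⟨hnbr, fun u hu v hv w hw huv hvw huw => ?_, fun t _ ht => ?_⟩
  · have : w ∈ G.neighborSet w := by
      rwa [← hnbr v hv w hw hvw, ← hnbr u hu v hv huv]
    exact G.irrefl this
  · by_contra! hcard
    exact hext.1.mono hcard t ⟨ht, rfl⟩

/-- Claim 1 of the paper: if, among all extremal pairs, `(G, B)` maximizes the number of
singleton components of `G - B` and, subject to that, minimizes the number of
neighborhood-equivalence classes of `B`, then any two non-adjacent vertices of `B` have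
identical neighborhoods; consequently `G[B]` is complete multipartite with at most `k`
parts (non-adjacency within `B` is transitive, and `B` contains no clique of `k + 1`
vertices). -/
theorem extremal_nonadj_same_neighborhood {V : Type*} [Fintype V] [DecidableEq V]
    (k s : ℕ) (G : SimpleGraph V) (B : Set V)
    (hext : ExtremalPair G B k s)
    (hmaxSing : ∀ (G' : SimpleGraph V) (B' : Set V), ExtremalPair G' B' k s →
      singCount G' B' ≤ singCount G B)
    (hminClass : ∀ (G' : SimpleGraph V) (B' : Set V), ExtremalPair G' B' k s →
      singCount G' B' = singCount G B → classCount G B ≤ classCount G' B') :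
    (∀ u ∈ B, ∀ w ∈ B, ¬ G.Adj u w → G.neighborSet u = G.neighborSet w) ∧
    (∀ u ∈ B, ∀ v ∈ B, ∀ w ∈ B, ¬ G.Adj u v → ¬ G.Adj v w → ¬ G.Adj u w) ∧
    (∀ t : Finset V, ↑t ⊆ B → G.IsClique ↑t → t.card ≤ k) :=
  extremal_nonadj_same_neighborhood_general k s G B hext hminClass
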